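/- Let a, b be natural numbers with a ≤ b. Let g : ℕ³ → ℝ, F : ℕ³ × ℕ³ × ℝ → ℝ, and nonnegative r, f : ℕ³ → ℝ satisfy the Lipschitz-type condition |F(x,y,z,s,t,q,w) − F(x,y,z,s,t,q,v)| ≤ r(x,y,z) · f(s,t,q) · |w − v| for all arguments with a ≤ z ≤ b, a ≤ q ≤ b, and all w, v ∈ ℝ. Let u : ℕ³ → ℝ satisfy, for all x, y ∈ ℕ and a ≤ z ≤ b, u(x,y,z) = g(x,y,z) + Σ_{s=0}^{x-1} Σ_{t=0}^{y-1} Σ_{q=a}^{b} F(x,y,z,s,t,q,u(s,t,q)). Define k(x,y,z) = Σ_{s=0}^{x-1} Σ_{t=0}^{y-1} Σ_{q=a}^{b} |F(x,y,z,s,t,q,g(s,t,q))|. Then for all x, y ∈ ℕ and a ≤ z ≤ b one has |u(x,y,z) − g(x,y,z)| ≤ k(x,y,z) + r(x,y,z) · C₃(x,y) · ∏_{s=0}^{x-1} (1 + Q₂(s,y)), where C₃(x,y) = Σ_{s=0}^{x-1} Σ_{t=0}^{y-1} Σ_{q=a}^{b} f(s,t,q) k(s,t,q) and Q₂(s,y)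 = Σ_{t=0}^{y-1} Σ_{q=a}^{b} f(s,t,q) r(s,t,q). -/

import Mathlib

/-!
Writing `m(x, y)` for the `f`-weighted sum of the deviations `|u - g|` over the box
`[0, x) × [0, y) × [a, b]`, the Lipschitz condition bounds `|u - g|` at `(x, y, z)` by
`k + r · m(x, y)`. Feeding this back into `m`, and using that `m` grows with `y`, gives the
linear sum inequality `m(x, y) ≤ C₃(x, y) + ∑_{s<x} Q₂(s, y) · m(s, y)` in `x`, which the discrete
Gronwall inequality solves by the product `∏_{s<x} (1 + Q₂(s, y))`.
-/

open Finset

theorem prod_range_one_add {R : Type*} [CommSemiring R] (Q : ℕ → R) (n : ℕ) :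
    ∏ s ∈ range n, (1 + Q s) = 1 + ∑ s ∈ range n, Q s * ∏ t ∈ range s, (1 + Q t) := by
  induction n with
  | zero => simp
  | succ n ih => rw [prod_range_succ, sum_range_succ, ih]; ring

theorem le_mul_prod_one_add_of_le_add_sum {R : Type*} [CommSemiring R] [PartialOrder R]
    [IsOrderedRing R] {C Q M : ℕ → R} (hC : Monotone C)
    (hQ : ∀ s, 0 ≤ Q s) (hM : ∀ x, M x ≤ C x + ∑ s ∈ range x, Q s * M s) (x : ℕ) :
    M x ≤ C x * ∏ s ∈ range x, (1 + Q s) := by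
  induction x using Nat.strong_induction_on with
  | _ x ih =>
    calc M x ≤ C x + ∑ s ∈ range x, Q s * M s := hM x
      _ ≤ C x + ∑ s ∈ range x, Q s * (C x * ∏ t ∈ range s, (1 + Q t)) := by
        gcongr with s hs
        · exact hQ s
        have hsx := mem_range.mp hs
        have : 0 ≤ ∏ t ∈ range s, (1 + Q t) := prod_nonneg fun t _ => add_nonneg zero_le_one (hQ t)
        exact (ih s hsx).trans (mul_le_mul_of_nonneg_right (hC hsx.le) this)
      _ = C x * ∏ s ∈ range x, (1 + Q s) := by
        rw [prod_range_one_add, mul_add, mul_one, mul_sum]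
        congr 1
        exact sum_congr rfl fun s _ => by ring

def boxSum (a b : ℕ) (φ : ℕ → ℕ → ℕ → ℝ) (x y : ℕ) : ℝ :=
  ∑ s ∈ range x, ∑ t ∈ range y, ∑ q ∈ Icc a b, φ s t q

section BoxSum

variable {a b : ℕ} {φ : ℕ → ℕ → ℕ → ℝ}

theorem boxSum_mono_left (hφ : ∀ s t q, 0 ≤ φ s t q) (y : ℕ) : Monotone (boxSum a b φ · y) :=
  fun _ _ hx => sum_le_sum_of_subset_of_nonneg (range_subset_range.mpr hx) fun s _ _ =>
    sum_nonneg fun t _ => sum_nonneg fun q _ => hφ s t q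

theorem boxSum_mono_right (hφ : ∀ s t q, 0 ≤ φ s t q) (x : ℕ) : Monotone (boxSum a b φ x) :=
  fun _ _ hy => sum_le_sum fun s _ => sum_le_sum_of_subset_of_nonneg (range_subset_range.mpr hy)
    fun t _ _ => sum_nonneg fun q _ => hφ s t q

theorem abs_boxSum_le_of_lipschitz {G : ℕ → ℕ → ℕ → ℝ → ℝ} {u g f : ℕ → ℕ → ℕ → ℝ} {L : ℝ}
    (hG : ∀ s t q, a ≤ q → q ≤ b → ∀ w v, |G s t q w - G s t q v| ≤ L * f s t q * |w - v|)
    (x y : ℕ) :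
    |boxSum a b (fun s t q => G s t q (u s t q)) x y| ≤
      boxSum a b (fun s t q => |G s t q (g s t q)|) x y +
        L * boxSum a b (f * fun s t q => |u s t q - g s t q|) x y := by
  calc |boxSum a b (fun s t q => G s t q (u s t q)) x y|
      ≤ boxSum a b (fun s t q => |G s t q (u s t q)|) x y :=
        (abs_sum_le_sum_abs _ _).trans <| sum_le_sum fun s _ => (abs_sum_le_sum_abs _ _).trans <|
          sum_le_sum fun t _ => abs_sum_le_sum_abs _ _
    _ ≤ boxSum a b
          (fun s t q => |G s t q (g s t q)| + L * (f s t q * |u s t q - g s t q|)) x y := by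
        unfold boxSum
        gcongr with s _ t _ q hq
        have := hG s t q (mem_Icc.mp hq).1 (mem_Icc.mp hq).2 (u s t q) (g s t q)
        linarith [abs_sub_abs_le_abs_sub (G s t q (u s t q)) (G s t q (g s t q))]
    _ = _ := by simp only [boxSum, sum_add_distrib, mul_sum, Pi.mul_apply]

theorem boxSum_le_of_le_add_mul_boxSum {k r f w : ℕ → ℕ → ℕ → ℝ} (hk : ∀ s t q, 0 ≤ k s t q)
    (hr : ∀ s t q, 0 ≤ r s t q) (hf : ∀ s t q, 0 ≤ f s t q) (hw₀ : ∀ s t q, 0 ≤ w s t q)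
    (hw : ∀ x y z, a ≤ z → z ≤ b → w x y z ≤ k x y z + r x y z * boxSum a b (f * w) x y)
    (x y : ℕ) :
    boxSum a b (f * w) x y ≤ boxSum a b (f * k) x y *
      ∏ s ∈ range x, (1 + ∑ t ∈ range y, ∑ q ∈ Icc a b, f s t q * r s t q) := by
  refine le_mul_prod_one_add_of_le_add_sum (M := (boxSum a b (f * w) · y))
    (Q := fun s => ∑ t ∈ range y, ∑ q ∈ Icc a b, f s t q * r s t q)
    (boxSum_mono_left (fun s t q => mul_nonneg (hf s t q) (hk s t q)) y)
    (fun s => sum_nonneg fun t _ => sum_nonneg fun q _ => mul_nonneg (hf s t q) (hr s t q))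
    (fun x => ?_) x
  calc boxSum a b (f * w) x y
      ≤ boxSum a b (fun s t q => f s t q * (k s t q + r s t q * boxSum a b (f * w) s y)) x y := by
        refine sum_le_sum fun s _ => sum_le_sum fun t ht => sum_le_sum fun q hq => ?_
        have : boxSum a b (f * w) s t ≤ boxSum a b (f * w) s y :=
          boxSum_mono_right (fun s t q => mul_nonneg (hf s t q) (hw₀ s t q)) s (mem_range.mp ht).le
        refine mul_le_mul_of_nonneg_left ((hw s t q (mem_Icc.mp hq).1 (mem_Icc.mp hq).2).trans ?_)
          (hf s t q)
        gcongr
        exact hr s t q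
    _ = boxSum a b (f * k) x y + ∑ s ∈ range x,
          (∑ t ∈ range y, ∑ q ∈ Icc a b, f s t q * r s t q) * boxSum a b (f * w) s y := by
        simp only [boxSum, ← sum_add_distrib, sum_mul, Pi.mul_apply]
        exact sum_congr rfl fun s _ => sum_congr rfl fun t _ => sum_congr rfl fun q _ => by ring

end BoxSum

theorem stmt_7_general (a b : ℕ)
    (g : ℕ → ℕ → ℕ → ℝ) (F : ℕ → ℕ → ℕ → ℕ → ℕ → ℕ → ℝ → ℝ)
    (r f : ℕ → ℕ → ℕ → ℝ) (u : ℕ → ℕ → ℕ → ℝ) (k : ℕ → ℕ → ℕ → ℝ)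
    (hr_nonneg : ∀ x y z, 0 ≤ r x y z)
    (hf_nonneg : ∀ x y z, 0 ≤ f x y z)
    (hF_lip : ∀ x y z s t q, a ≤ z → z ≤ b → a ≤ q → q ≤ b → ∀ w v : ℝ,
      |F x y z s t q w - F x y z s t q v| ≤ r x y z * f s t q * |w - v|)
    (heq : ∀ x y z, a ≤ z → z ≤ b →
      u x y z = g x y z +
        ∑ s ∈ Finset.range x, ∑ t ∈ Finset.range y, ∑ q ∈ Finset.Icc a b,
          F x y z s t q (u s t q))
    (hk : ∀ x y z, k x y z =
      ∑ s ∈ Finset.range x, ∑ t ∈ Finset.range y, ∑ q ∈ Finset.Icc a b,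
        |F x y z s t q (g s t q)|) :
    ∀ x y z, a ≤ z → z ≤ b →
      |u x y z - g x y z| ≤ k x y z + r x y z *
        (∑ s ∈ Finset.range x, ∑ t ∈ Finset.range y, ∑ q ∈ Finset.Icc a b,
          f s t q * k s t q) *
        ∏ s ∈ Finset.range x,
          (1 + ∑ t ∈ Finset.range y, ∑ q ∈ Finset.Icc a b,
            f s t q * r s t q) := by
  set dev : ℕ → ℕ → ℕ → ℝ := fun x y z => |u x y z - g x y z|
  have hdev : ∀ x y z, a ≤ z → z ≤ b →
      dev x y z ≤ k x y z + r x y z * boxSum a b (f * dev) x y := by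
    intro x y z hz₁ hz₂
    have hsum : u x y z - g x y z = boxSum a b (fun s t q => F x y z s t q (u s t q)) x y := by
      rw [heq x y z hz₁ hz₂, add_sub_cancel_left, boxSum]
    show |u x y z - g x y z| ≤ _
    rw [hsum, hk]
    exact abs_boxSum_le_of_lipschitz (fun s t q => hF_lip x y z s t q hz₁ hz₂) x y
  have hk_nonneg : ∀ x y z, 0 ≤ k x y z := fun x y z => by rw [hk]; positivity
  intro x y z hz₁ hz₂
  calc dev x y z ≤ k x y z + r x y z * boxSum a b (f * dev) x y := hdev x y z hz₁ hz₂
    _ ≤ _ := by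
      rw [mul_assoc]
      gcongr
      · exact hr_nonneg x y z
      exact boxSum_le_of_le_add_mul_boxSum hk_nonneg hr_nonneg hf_nonneg
        (fun _ _ _ => abs_nonneg _) hdev x y

/-- Discrete (𝕋 = ℤ, restricted to ℕ with base points 0) case of the paper's
Theorem 3.2: estimate of the deviation of a solution of a sum (Volterra-type)
equation in three variables from its forcing term, under a Lipschitz
condition on the kernel. -/
theorem stmt_7 (a b : ℕ) (hab : a ≤ b)
    (g : ℕ → ℕ → ℕ → ℝ) (F : ℕ → ℕ → ℕ → ℕ → ℕ → ℕ → ℝ → ℝ)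
    (r f : ℕ → ℕ → ℕ → ℝ) (u : ℕ → ℕ → ℕ → ℝ) (k : ℕ → ℕ → ℕ → ℝ)
    (hr_nonneg : ∀ x y z, 0 ≤ r x y z)
    (hf_nonneg : ∀ x y z, 0 ≤ f x y z)
    (hF_lip : ∀ x y z s t q, a ≤ z → z ≤ b → a ≤ q → q ≤ b → ∀ w v : ℝ,
      |F x y z s t q w - F x y z s t q v| ≤ r x y z * f s t q * |w - v|)
    (heq : ∀ x y z, a ≤ z → z ≤ b →
      u x y z = g x y z +
        ∑ s ∈ Finset.range x, ∑ t ∈ Finset.range y, ∑ q ∈ Finset.Icc a b,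
          F x y z s t q (u s t q))
    (hk : ∀ x y z, k x y z =
      ∑ s ∈ Finset.range x, ∑ t ∈ Finset.range y, ∑ q ∈ Finset.Icc a b,
        |F x y z s t q (g s t q)|) :
    ∀ x y z, a ≤ z → z ≤ b →
      |u x y z - g x y z| ≤ k x y z + r x y z *
        (∑ s ∈ Finset.range x, ∑ t ∈ Finset.range y, ∑ q ∈ Finset.Icc a b,
          f s t q * k s t q) *
        ∏ s ∈ Finset.range x,
          (1 + ∑ t ∈ Finset.range y, ∑ q ∈ Finset.Icc a b,
            f s t q * r s t q) :=
  stmt_7_general a b g F r f u k hr_nonneg hf_nonneg hF_lip heq hk
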